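/- Let α, γ, δ, q, ε ∈ ℂ with ε ≠ 0 and γ+n−1 ≠ 0, γ+n ≠ 0 for all n ≥ 0. Define coefficients a_n by the three-term recurrence R_n a_n + Q_{n−1} a_{n−1} + P_{n−2} a_{n−2} = 0 with a_0 = 1, a_{−1} = a_{−2} = 0, where R_n = −n(γ+n−1), Q_n = n(γ+n−1) − q, P_n = −δ(α+εn)/(γ+n). If the formal series u(z) = Σ_{n=0}^{∞} a_n · ₁F₁(α/ε + n; γ+n; −εz) converges suitably (e.g., termwise as a formal manipulation), then plugging it into the operator L[u] = z²u'' + (εz² + γz + δ)u' + (αz − q)u yields zero; equivalently, the formal sum Σ_n a_n · L[u_n] vanishes where u_n = ₁F₁(α/ε+n; γ+n; −εz). -/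

import Mathlib

open PowerSeries

/-- Pochhammer symbol `(a)_k = a (a+1) ⋯ (a+k−1)` in `ℂ`. -/
noncomputable def poch (a : ℂ) (k : ℕ) : ℂ := (ascPochhammer ℂ k).eval a

/-- Kummer confluent hypergeometric series `₁F₁(a;b;sz)` as a formal power series in `z`. -/
noncomputable def F1 (a b s : ℂ) : PowerSeries ℂ :=
  PowerSeries.mk fun k => poch a k / poch b k * s ^ k / (k.factorial : ℂ)

/-- Formal derivative of a power series. -/
noncomputable def D (f : PowerSeries ℂ) : PowerSeries ℂ := f.derivativeFun

/-- The double-confluent Heun operator multiplied by `z²`. -/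
noncomputable def L (α γ δ q ε : ℂ) (f : PowerSeries ℂ) : PowerSeries ℂ :=
  (X : PowerSeries ℂ) ^ 2 * D (D f)
    + (PowerSeries.C ε * X ^ 2 + PowerSeries.C γ * X + PowerSeries.C δ) * D f
    + (PowerSeries.C α * X - PowerSeries.C q) * f

/-! For `u = ₁F₁(a; b; -εz)` Kummer's equation `z u'' + (b + εz) u' + εa u = 0` turns the Heun
operator into a first-order one: on `u_n = ₁F₁(α/ε + n; γ + n; -εz)` it becomes
`L u_n = -n (z u_n' + εz u_n) + δ u_n' - q u_n`. The contiguous relations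
`δ u_n' = P_n u_{n+1}` and `z u_n' + εz u_n = (γ + n - 1) (u_{n-1} - u_n)` then give
`L u_n = R_n u_{n-1} + Q_n u_n + P_n u_{n+1}`, so against the three-term recurrence for `a_n` the
sum `∑ a_n L u_n` telescopes down to the two boundary terms. -/

lemma poch_succ (a : ℂ) (k : ℕ) : poch a (k + 1) = poch a k * (a + k) :=
  ascPochhammer_succ_eval k a

lemma poch_succ' (a : ℂ) (k : ℕ) : poch a (k + 1) = a * poch (a + 1) k := by
  simp [poch, ascPochhammer_succ_left, Polynomial.eval_comp]

lemma poch_ne_zero {b : ℂ} (hb : ∀ j : ℕ, b + j ≠ 0) (k : ℕ) : poch b k ≠ 0 := by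
  simp only [poch, ne_eq, ascPochhammer_eval_eq_zero_iff, not_exists, not_and]
  intro j _ h
  exact hb j (by rw [h]; ring)

lemma coeff_F1 (a b s : ℂ) (k : ℕ) :
    coeff k (F1 a b s) = poch a k / poch b k * s ^ k / k.factorial :=
  coeff_mk _ _

lemma coeff_D (f : PowerSeries ℂ) (k : ℕ) : coeff k (D f) = coeff (k + 1) f * (k + 1) :=
  coeff_derivative f k

lemma D_C_mul (c : ℂ) (f : PowerSeries ℂ) : D (C c * f) = C c * D f := by
  ext k; simp [coeff_D, mul_assoc]

lemma D_F1 (a b s : ℂ) : D (F1 a b s) = C (s * a / b) * F1 (a + 1) (b + 1) s := by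
  ext k
  rw [coeff_D, coeff_C_mul, coeff_F1, coeff_F1, poch_succ', poch_succ', mul_div_mul_comm,
    Nat.factorial_succ]
  have hk : (k + 1 : ℂ) ≠ 0 := Nat.cast_add_one_ne_zero k
  push_cast
  field_simp
  ring

lemma X_mul_D_F1_add_one {b : ℂ} (a s : ℂ) (hb : ∀ k : ℕ, b + k ≠ 0) :
    X * D (F1 (a + 1) (b + 1) s)
      = C b * (F1 a b s - F1 (a + 1) (b + 1) s) + C s * X * F1 (a + 1) (b + 1) s := by
  have hb1 (k : ℕ) : b + 1 + k ≠ 0 := by convert hb (k + 1) using 1; push_cast; ring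
  ext k
  rcases k with _ | k
  · simp only [mul_assoc, coeff_zero_X_mul, map_add, coeff_C_mul, map_sub, coeff_F1]
    simp [poch]
  · rw [map_add, mul_assoc, coeff_succ_X_mul, coeff_C_mul, coeff_C_mul, coeff_succ_X_mul,
      map_sub, coeff_D]
    simp only [coeff_F1]
    rw [poch_succ' a, poch_succ' b, poch_succ (a + 1), poch_succ (b + 1), Nat.factorial_succ]
    have hb0 : b ≠ 0 := by simpa using hb 0
    have hbk := hb1 k
    have hpoch := poch_ne_zero hb1 k
    have hk : (k + 1 : ℂ) ≠ 0 := Nat.cast_add_one_ne_zero k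
    push_cast at *
    field_simp
    ring

lemma X_mul_D_D_F1 {b : ℂ} (a s : ℂ) (hb : ∀ k : ℕ, b + k ≠ 0) :
    X * D (D (F1 a b s)) = C (s * a) * F1 a b s - (C b - C s * X) * D (F1 a b s) := by
  have hCb : C (s * a / b) * C b = C (s * a) := by
    rw [← map_mul, div_mul_cancel₀ _ (by simpa using hb 0)]
  rw [D_F1, D_C_mul]
  linear_combination C (s * a / b) * X_mul_D_F1_add_one a s hb + F1 a b s * hCb

lemma L_F1 {b : ℂ} (α γ δ q ε a : ℂ) (hb : ∀ k : ℕ, b + k ≠ 0) :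
    L α γ δ q ε (F1 a b (-ε)) = C (γ - b) * (X * D (F1 a b (-ε))) + C δ * D (F1 a b (-ε))
      + C (α - ε * a) * (X * F1 a b (-ε)) - C q * F1 a b (-ε) := by
  have hkummer := X_mul_D_D_F1 a (-ε) hb
  simp only [map_neg, map_mul, map_sub] at hkummer ⊢
  unfold L
  linear_combination X * hkummer

noncomputable def kummerTerm (α γ ε : ℂ) (n : ℕ) : PowerSeries ℂ := F1 (α / ε + n) (γ + n) (-ε)

section kummerTerm

variable {α γ ε : ℂ}

lemma kummerTerm_succ (n : ℕ) :
    kummerTerm α γ ε (n + 1) = F1 (α / ε + n + 1) (γ + n + 1) (-ε) := by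
  simp only [kummerTerm, Nat.cast_succ, add_assoc]

lemma C_mul_D_kummerTerm (δ : ℂ) (hε : ε ≠ 0) (n : ℕ) :
    C δ * D (kummerTerm α γ ε n)
      = C (-δ * (α + ε * n) / (γ + n)) * kummerTerm α γ ε (n + 1) := by
  rw [kummerTerm, D_F1, kummerTerm_succ, ← mul_assoc, ← map_mul]
  congr 2
  field_simp

lemma X_mul_D_kummerTerm_succ (hγ : ∀ k : ℕ, γ + k ≠ 0) (n : ℕ) :
    X * D (kummerTerm α γ ε (n + 1)) + C ε * X * kummerTerm α γ ε (n + 1)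
      = C (γ + n) * (kummerTerm α γ ε n - kummerTerm α γ ε (n + 1)) := by
  have hb (k : ℕ) : γ + n + k ≠ 0 := by simpa [add_assoc] using hγ (n + k)
  rw [kummerTerm_succ, X_mul_D_F1_add_one _ _ hb, kummerTerm, map_neg]
  ring

-- At `n = 0` the truncated `n - 1` is harmless: its coefficient vanishes.
lemma L_kummerTerm (δ q : ℂ) (hε : ε ≠ 0) (hγ : ∀ k : ℕ, γ + k ≠ 0) (n : ℕ) :
    L α γ δ q ε (kummerTerm α γ ε n)
      = C (-(n : ℂ) * (γ + n - 1)) * kummerTerm α γ ε (n - 1)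
        + C ((n : ℂ) * (γ + n - 1) - q) * kummerTerm α γ ε n
        + C (-δ * (α + ε * n) / (γ + n)) * kummerTerm α γ ε (n + 1) := by
  have hb (k : ℕ) : γ + n + k ≠ 0 := by simpa [add_assoc] using hγ (n + k)
  have hreduce := L_F1 α γ δ q ε (α / ε + n) hb
  have hlin : α - ε * (α / ε + n) = -ε * n := by field_simp; ring
  rw [← kummerTerm, sub_add_cancel_left, hlin, C_mul_D_kummerTerm δ hε] at hreduce
  rw [hreduce]
  rcases n with _ | m
  · simp only [Nat.cast_zero, neg_zero, mul_zero, zero_mul, map_zero, zero_sub, map_neg]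
    ring
  · have hlower := X_mul_D_kummerTerm_succ (α := α) (ε := ε) hγ m
    rw [Nat.add_sub_cancel]
    push_cast at hlower ⊢
    simp only [map_add, map_sub, map_mul, map_neg, map_natCast, map_one] at hlower ⊢
    linear_combination (-(m + 1 : PowerSeries ℂ)) * hlower

end kummerTerm

theorem sum_mul_threeTerm_eq_boundary {S : Type*} [CommRing S] (a R Q P u : ℕ → S)
    (hR0 : R 0 = 0) (h1 : R 1 * a 1 + Q 0 * a 0 = 0)
    (hrec : ∀ n, R (n + 2) * a (n + 2) + Q (n + 1) * a (n + 1) + P n * a n = 0)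
    (M : ℕ) (hM : 1 ≤ M) :
    ∑ n ∈ Finset.range (M + 1), a n * (R n * u (n - 1) + Q n * u n + P n * u (n + 1))
      = (Q M * a M + P (M - 1) * a (M - 1)) * u M + P M * a M * u (M + 1) := by
  induction M, hM using Nat.le_induction with
  | base =>
    simp only [Finset.sum_range_succ, Finset.sum_range_zero, hR0]
    linear_combination u 0 * h1
  | succ M hM ih =>
    obtain ⟨m, rfl⟩ := Nat.exists_eq_add_of_le' hM
    rw [Finset.sum_range_succ, ih]
    simp only [Nat.add_sub_cancel, Nat.add_succ_sub_one]
    linear_combination u (m + 1) * hrec m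

theorem stmt_8_general (α γ δ q ε : ℂ) (hε : ε ≠ 0)
    (hγ : ∀ n : ℕ, γ + n - 1 ≠ 0 ∧ γ + n ≠ 0)
    (R Q P : ℕ → ℂ)
    (hR : ∀ n : ℕ, R n = -(n : ℂ) * (γ + n - 1))
    (hQ : ∀ n : ℕ, Q n = (n : ℂ) * (γ + n - 1) - q)
    (hP : ∀ n : ℕ, P n = -δ * (α + ε * n) / (γ + n))
    (a : ℕ → ℂ)
    (hrec1 : R 1 * a 1 + Q 0 * a 0 = 0)
    (hrec : ∀ n : ℕ, R (n + 2) * a (n + 2) + Q (n + 1) * a (n + 1) + P n * a n = 0) :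
    ∀ M : ℕ, 1 ≤ M →
      (∑ n ∈ Finset.range (M + 1),
          PowerSeries.C (a n) * L α γ δ q ε (F1 (α / ε + n) (γ + n) (-ε)))
        = PowerSeries.C (Q M * a M + P (M - 1) * a (M - 1)) * F1 (α / ε + M) (γ + M) (-ε)
          + PowerSeries.C (P M * a M) * F1 (α / ε + (M + 1 : ℕ)) (γ + (M + 1 : ℕ)) (-ε) := by
  intro M hM
  have hL (n : ℕ) : L α γ δ q ε (kummerTerm α γ ε n) = C (R n) * kummerTerm α γ ε (n - 1)
      + C (Q n) * kummerTerm α γ ε n + C (P n) * kummerTerm α γ ε (n + 1) := by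
    rw [hR, hQ, hP]
    exact L_kummerTerm δ q hε (fun k => (hγ k).2) n
  have hCmul (x y : ℂ) : C (x * y) = C x * C y := map_mul C x y
  have hsum := sum_mul_threeTerm_eq_boundary (C ∘ a) (C ∘ R) (C ∘ Q) (C ∘ P) (kummerTerm α γ ε)
    (by simp [hR]) (by simp only [Function.comp, ← hCmul, ← map_add, hrec1, map_zero])
    (fun n => by simp only [Function.comp, ← hCmul, ← map_add, hrec n, map_zero]) M hM
  simp only [Function.comp, ← hL, ← hCmul, ← map_add] at hsum
  exact hsum

theorem stmt_8 (α γ δ q ε : ℂ) (hε : ε ≠ 0)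
    (hγ : ∀ n : ℕ, γ + n - 1 ≠ 0 ∧ γ + n ≠ 0)
    (R Q P : ℕ → ℂ)
    (hR : ∀ n : ℕ, R n = -(n : ℂ) * (γ + n - 1))
    (hQ : ∀ n : ℕ, Q n = (n : ℂ) * (γ + n - 1) - q)
    (hP : ∀ n : ℕ, P n = -δ * (α + ε * n) / (γ + n))
    (a : ℕ → ℂ) (ha0 : a 0 = 1)
    (hrec1 : R 1 * a 1 + Q 0 * a 0 = 0)
    (hrec : ∀ n : ℕ, R (n + 2) * a (n + 2) + Q (n + 1) * a (n + 1) + P n * a n = 0) :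
    ∀ M : ℕ, 1 ≤ M →
      (∑ n ∈ Finset.range (M + 1),
          PowerSeries.C (a n) * L α γ δ q ε (F1 (α / ε + n) (γ + n) (-ε)))
        = PowerSeries.C (Q M * a M + P (M - 1) * a (M - 1)) * F1 (α / ε + M) (γ + M) (-ε)
          + PowerSeries.C (P M * a M) * F1 (α / ε + (M + 1 : ℕ)) (γ + (M + 1 : ℕ)) (-ε) :=
  stmt_8_general α γ δ q ε hε hγ R Q P hR hQ hP a hrec1 hrec
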